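/- arXiv:1609.05828 — 2 statements merged into one kernel-verified Lean document; each statement's English description precedes it below -/
import Mathlib

section
/- Under the standing assumptions, for any two distinct squares Q and Q' of S of the same color (both red or both black) there exists c : ℤ×ℤ → ℝ×ℝ supported on the interior vertices such that (Dc)(Q) = 1, (Dc)(Q') = −1, and (Dc)(Q'') = 0 for every other square Q'' of S. -/
/-- The closed unit square `[i,i+1] × [j,j+1] ⊆ ℝ²` indexed by `q = (i,j) ∈ ℤ × ℤ`. -/
def unitSq (q : ℤ × ℤ) : Set (ℝ × ℝ) :=
  Set.Icc (q.1 : ℝ) (q.1 + 1) ×ˢ Set.Icc (q.2 : ℝ) (q.2 + 1)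

/-- `Ω̄`, the union of the closed squares of the mesh `S`. -/
def meshRegion (S : Finset (ℤ × ℤ)) : Set (ℝ × ℝ) := ⋃ q ∈ S, unitSq q

/-- `v` is an interior vertex of `S`: all four grid squares having `v` as a corner belong
to `S`. -/
abbrev interiorVertex (S : Finset (ℤ × ℤ)) (v : ℤ × ℤ) : Prop :=
  (v.1 - 1, v.2 - 1) ∈ S ∧ (v.1 - 1, v.2) ∈ S ∧ (v.1, v.2 - 1) ∈ S ∧ v ∈ S

/-- `v` is a mesh vertex of `S`: it is a corner of some square of `S`. -/
abbrev meshVertex (S : Finset (ℤ × ℤ)) (v : ℤ × ℤ) : Prop :=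
  (v.1 - 1, v.2 - 1) ∈ S ∨ (v.1 - 1, v.2) ∈ S ∨ (v.1, v.2 - 1) ∈ S ∨ v ∈ S

/-- `v` is a boundary vertex of `S`: a mesh vertex which is not interior. -/
abbrev boundaryVertex (S : Finset (ℤ × ℤ)) (v : ℤ × ℤ) : Prop :=
  meshVertex S v ∧ ¬ interiorVertex S v

/-- The four corners of the square indexed by `q`. -/
def cornersF (q : ℤ × ℤ) : Finset (ℤ × ℤ) :=
  {q, (q.1 + 1, q.2), (q.1, q.2 + 1), (q.1 + 1, q.2 + 1)}

/-- `q` is an interior square: all four of its corners are interior vertices. -/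
abbrev interiorSquare (S : Finset (ℤ × ℤ)) (q : ℤ × ℤ) : Prop :=
  interiorVertex S q ∧ interiorVertex S (q.1 + 1, q.2) ∧
    interiorVertex S (q.1, q.2 + 1) ∧ interiorVertex S (q.1 + 1, q.2 + 1)

/-- The square `(i,j)` is red if `i + j` is even (and black otherwise). -/
abbrev isRed (q : ℤ × ℤ) : Prop := (q.1 + q.2) % 2 = 0

/-- The standing assumptions on the mesh `S`: it is nonempty, `Ω` is connected and simply
connected, no square has four boundary corners, every grid edge shared by two squares of `S`
has an interior endpoint, and no square has exactly two boundary corners lying at diagonally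
opposite corners. -/
structure Standing (S : Finset (ℤ × ℤ)) : Prop where
  nonempty : S.Nonempty
  connected : IsConnected (interior (meshRegion S))
  simplyConnected : SimplyConnectedSpace ↥(interior (meshRegion S))
  noFourBoundary : ∀ q ∈ S,
    ¬ (boundaryVertex S q ∧ boundaryVertex S (q.1 + 1, q.2) ∧
        boundaryVertex S (q.1, q.2 + 1) ∧ boundaryVertex S (q.1 + 1, q.2 + 1))
  edgeH : ∀ v : ℤ × ℤ, v ∈ S → (v.1, v.2 - 1) ∈ S →
    interiorVertex S v ∨ interiorVertex S (v.1 + 1, v.2)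
  edgeV : ∀ v : ℤ × ℤ, v ∈ S → (v.1 - 1, v.2) ∈ S →
    interiorVertex S v ∨ interiorVertex S (v.1, v.2 + 1)
  noDiagOne : ∀ q ∈ S,
    ¬ (boundaryVertex S q ∧ boundaryVertex S (q.1 + 1, q.2 + 1) ∧
        interiorVertex S (q.1 + 1, q.2) ∧ interiorVertex S (q.1, q.2 + 1))
  noDiagTwo : ∀ q ∈ S,
    ¬ (boundaryVertex S (q.1 + 1, q.2) ∧ boundaryVertex S (q.1, q.2 + 1) ∧
        interiorVertex S q ∧ interiorVertex S (q.1 + 1, q.2 + 1))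

/-- The discrete `x`-derivative `∂ˣc(Q)` of a scalar vertex function on the square `Q`. -/
def dX (c : ℤ × ℤ → ℝ) (q : ℤ × ℤ) : ℝ :=
  c (q.1 + 1, q.2) + c (q.1 + 1, q.2 + 1) - c (q.1, q.2) - c (q.1, q.2 + 1)

/-- The discrete `y`-derivative `∂ʸc(Q)` of a scalar vertex function on the square `Q`. -/
def dY (c : ℤ × ℤ → ℝ) (q : ℤ × ℤ) : ℝ :=
  c (q.1, q.2 + 1) + c (q.1 + 1, q.2 + 1) - c (q.1, q.2) - c (q.1 + 1, q.2)

/-- The discrete divergence `(Dc)(Q) = ∂ˣc¹(Q) + ∂ʸc²(Q)`. -/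
def Ddiv (c : ℤ × ℤ → ℝ × ℝ) (q : ℤ × ℤ) : ℝ :=
  dX (fun v => (c v).1) q + dY (fun v => (c v).2) q

/-- The discrete curl `(Cc)(Q) = ∂ˣc²(Q) − ∂ʸc¹(Q)`. -/
def Ccurl (c : ℤ × ℤ → ℝ × ℝ) (q : ℤ × ℤ) : ℝ :=
  dX (fun v => (c v).2) q - dY (fun v => (c v).1) q

/-!
A field equal to `(1/2, 1/2)` (resp. `(1/2, -1/2)`) at an interior vertex `v` and zero elsewhere
has divergence `1` and `-1` on the two squares meeting diagonally at `v` (resp. antidiagonally),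
and `0` on every other square. So it suffices to join `Q` to `Q'` by diagonal steps across
interior vertices. Connectedness of `Ω` joins them by a path of edge-adjacent squares of `S`;
adjacent squares have opposite colours, so the path has even length, and each two-step piece
`a – b – c` is replaced by diagonal steps around `b`: the four edge-neighbours of `b` form a cycle
whose links are the interior corners of `b`, and the edge and diagonal conditions of the standing
assumptions make every neighbour lying in `S` sit on a link, and rule out that the links are
exactly two opposite corners, so any two neighbours of `b` in `S` are joined.
-/

theorem Ddiv_add (f g : ℤ × ℤ → ℝ × ℝ) : Ddiv (f + g) = Ddiv f + Ddiv g := by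
  funext q
  simp only [Ddiv, dX, dY, Pi.add_apply, Prod.fst_add, Prod.snd_add]
  ring

theorem Ddiv_neg (f : ℤ × ℤ → ℝ × ℝ) : Ddiv (-f) = -Ddiv f := by
  funext q
  simp only [Ddiv, dX, dY, Pi.neg_apply, Prod.fst_neg, Prod.snd_neg]
  ring

theorem Ddiv_zero : Ddiv 0 = 0 := by
  funext q
  simp [Ddiv, dX, dY]

theorem Ddiv_single (v : ℤ × ℤ) (p : ℝ × ℝ) :
    Ddiv (Pi.single v p) =
      Pi.single (v.1 - 1, v.2 - 1) (p.1 + p.2) + Pi.single (v.1 - 1, v.2) (p.1 - p.2) +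
        Pi.single (v.1, v.2 - 1) (p.2 - p.1) - Pi.single v (p.1 + p.2) := by
  funext ⟨i, j⟩
  obtain ⟨a, b⟩ := v
  simp only [Ddiv, dX, dY, Pi.single_apply, Pi.add_apply, Pi.sub_apply, Prod.mk.injEq,
    apply_ite Prod.fst, apply_ite Prod.snd, Prod.fst_zero, Prod.snd_zero]
  split_ifs <;> first | ring1 | (exfalso; omega)

def DivConnected (S : Finset (ℤ × ℤ)) (a c : ℤ × ℤ) : Prop :=
  ∃ f : ℤ × ℤ → ℝ × ℝ, (∀ v, ¬ interiorVertex S v → f v = 0) ∧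
    Ddiv f = Pi.single a 1 - Pi.single c 1

namespace DivConnected

variable {S : Finset (ℤ × ℤ)}

theorem equivalence : Equivalence (DivConnected S) where
  refl _ := ⟨0, fun _ _ => rfl, by rw [Ddiv_zero, sub_self]⟩
  symm := fun ⟨f, hf, hdiv⟩ => ⟨-f, fun v hv => by simp [hf v hv], by rw [Ddiv_neg, hdiv, neg_sub]⟩
  trans := fun ⟨f, hf, hdf⟩ ⟨g, hg, hdg⟩ =>
    ⟨f + g, fun v hv => by simp [hf v hv, hg v hv], by rw [Ddiv_add, hdf, hdg, sub_add_sub_cancel]⟩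

theorem of_dipole {v a c : ℤ × ℤ} (hv : interiorVertex S v) (p : ℝ × ℝ)
    (hdiv : Ddiv (Pi.single v p) = Pi.single a 1 - Pi.single c 1) : DivConnected S a c := by
  refine ⟨Pi.single v p, fun w hw => ?_, hdiv⟩
  rw [Pi.single_apply, if_neg (by rintro rfl; exact hw hv)]

theorem of_interiorVertex_diag {v : ℤ × ℤ} (hv : interiorVertex S v) :
    DivConnected S (v.1 - 1, v.2 - 1) v :=
  of_dipole hv (1 / 2, 1 / 2) (by rw [Ddiv_single]; norm_num)

theorem of_interiorVertex_antidiag {v : ℤ × ℤ} (hv : interiorVertex S v) :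
    DivConnected S (v.1 - 1, v.2) (v.1, v.2 - 1) :=
  of_dipole hv (1 / 2, -1 / 2) (by rw [Ddiv_single]; norm_num [Pi.single_neg]; abel)

end DivConnected

theorem eq_of_fourCycle {β : Type*} (n : Fin 4 → β) (e : Fin 4 → Prop)
    (he : ∀ k, e k → n k = n (k + 1))
    (h02 : e 0 → e 2 → e 1 ∨ e 3) (h13 : e 1 → e 3 → e 0 ∨ e 2)
    {x y : Fin 4} (hx : e (x - 1) ∨ e x) (hy : e (y - 1) ∨ e y) : n x = n y := by
  have h0 := he 0
  have h1 := he 1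
  have h2 := he 2
  have h3 := he 3
  fin_cases x <;> fin_cases y <;> simp at * <;> grind

theorem Equivalence.rel_of_fourCycle {α : Type*} {r : α → α → Prop} (hr : Equivalence r)
    (n : Fin 4 → α) (e : Fin 4 → Prop) (he : ∀ k, e k → r (n k) (n (k + 1)))
    (h02 : e 0 → e 2 → e 1 ∨ e 3) (h13 : e 1 → e 3 → e 0 ∨ e 2)
    {x y : Fin 4} (hx : e (x - 1) ∨ e x) (hy : e (y - 1) ∨ e y) : r (n x) (n y) :=
  let s : Setoid α := ⟨r, hr⟩
  Quotient.exact <| eq_of_fourCycle (fun k => (⟦n k⟧ : Quotient s)) e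
    (fun k hk => Quotient.sound (he k hk)) h02 h13 hx hy

theorem Relation.ReflTransGen.comp_self_of_iff_not {α : Type*} {R : α → α → Prop} {p : α → Prop}
    (hR : ∀ a b, R a b → (p a ↔ ¬ p b)) {a c : α} (h : ReflTransGen R a c) (hp : p a ↔ p c) :
    ReflTransGen (Comp R R) a c := by
  have key : ((p a ↔ p c) → ReflTransGen (Comp R R) a c) ∧
      (¬ (p a ↔ p c) → ∃ b, ReflTransGen (Comp R R) a b ∧ R b c) := by
    clear hp
    induction h with
    | refl => exact ⟨fun _ => .refl, fun h => absurd Iff.rfl h⟩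
    | tail _ hcd ih =>
      have hflip := hR _ _ hcd
      refine ⟨fun hsame => ?_, fun hdiff => ⟨_, ih.1 (by tauto), hcd⟩⟩
      obtain ⟨b, hab, hbc⟩ := ih.2 (by tauto)
      exact hab.tail ⟨_, hbc, hcd⟩
  exact key.1 hp

/-- The edge-neighbours of `b` counterclockwise from the left one; corner `k` of `b`, whose
interiority is `cornerInterior S b k`, is the common corner of neighbours `k` and `k + 1`. -/
def squareNbr (b : ℤ × ℤ) : Fin 4 → ℤ × ℤ :=
  ![(b.1 - 1, b.2), (b.1, b.2 - 1), (b.1 + 1, b.2), (b.1, b.2 + 1)]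

def cornerInterior (S : Finset (ℤ × ℤ)) (b : ℤ × ℤ) : Fin 4 → Prop :=
  ![interiorVertex S b, interiorVertex S (b.1 + 1, b.2), interiorVertex S (b.1 + 1, b.2 + 1),
    interiorVertex S (b.1, b.2 + 1)]

def MeshAdj (S : Finset (ℤ × ℤ)) (a b : ℤ × ℤ) : Prop :=
  a ∈ S ∧ b ∈ S ∧ ∃ k, a = squareNbr b k

theorem squareNbr_add_two {a b : ℤ × ℤ} {k : Fin 4} (h : a = squareNbr b k) :
    b = squareNbr a (k + 2) := by
  subst h
  fin_cases k <;> simp [squareNbr]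

theorem MeshAdj.symm {S : Finset (ℤ × ℤ)} {a b : ℤ × ℤ} (h : MeshAdj S a b) : MeshAdj S b a :=
  let ⟨ha, hb, k, hk⟩ := h
  ⟨hb, ha, k + 2, squareNbr_add_two hk⟩

theorem MeshAdj.isRed_iff_not {S : Finset (ℤ × ℤ)} {a b : ℤ × ℤ} (h : MeshAdj S a b) :
    isRed a ↔ ¬ isRed b := by
  obtain ⟨-, -, k, rfl⟩ := h
  fin_cases k <;> simp [squareNbr] <;> omega

theorem divConnected_squareNbr_succ {S : Finset (ℤ × ℤ)} {b : ℤ × ℤ} {k : Fin 4}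
    (hk : cornerInterior S b k) :
    DivConnected S (squareNbr b k) (squareNbr b (k + 1)) := by
  obtain ⟨i, j⟩ := b
  fin_cases k <;> simp only [cornerInterior, squareNbr] at hk ⊢ <;> simp at hk ⊢
  · exact .of_interiorVertex_antidiag hk
  · simpa using DivConnected.of_interiorVertex_diag hk
  · simpa using DivConnected.equivalence.symm (DivConnected.of_interiorVertex_antidiag hk)
  · simpa using DivConnected.equivalence.symm (DivConnected.of_interiorVertex_diag hk)

namespace Standing

variable {S : Finset (ℤ × ℤ)} {b : ℤ × ℤ}

theorem cornerInterior_of_squareNbr_mem (h : Standing S) (hb : b ∈ S) {k : Fin 4}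
    (hk : squareNbr b k ∈ S) : cornerInterior S b (k - 1) ∨ cornerInterior S b k := by
  fin_cases k <;> simp only [squareNbr, cornerInterior, Fin.isValue, Fin.reduceFinMk,
    Fin.reduceSub, Matrix.cons_val, Matrix.cons_val_zero, Matrix.cons_val_one, zero_sub,
    sub_self] at hk ⊢
  · exact (h.edgeV b hb hk).symm
  · exact h.edgeH b hb hk
  · exact h.edgeV _ hk (by simpa using hb)
  · exact (h.edgeH _ hk (by simpa using hb)).symm

theorem interiorVertex_antidiag_of_diag (h : Standing S) (hb : b ∈ S)
    (h00 : interiorVertex S b) (h11 : interiorVertex S (b.1 + 1, b.2 + 1)) :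
    interiorVertex S (b.1 + 1, b.2) ∨ interiorVertex S (b.1, b.2 + 1) := by
  by_contra! hne
  exact h.noDiagTwo b hb
    ⟨⟨by simp [meshVertex, hb], hne.1⟩, ⟨by simp [meshVertex, hb], hne.2⟩, h00, h11⟩

theorem interiorVertex_diag_of_antidiag (h : Standing S) (hb : b ∈ S)
    (h10 : interiorVertex S (b.1 + 1, b.2)) (h01 : interiorVertex S (b.1, b.2 + 1)) :
    interiorVertex S b ∨ interiorVertex S (b.1 + 1, b.2 + 1) := by
  by_contra! hne
  exact h.noDiagOne b hb
    ⟨⟨by simp [meshVertex, hb], hne.1⟩, ⟨by simp [meshVertex, hb], hne.2⟩, h10, h01⟩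

theorem divConnected_of_meshAdj_of_meshAdj (h : Standing S) {a c : ℤ × ℤ}
    (hab : MeshAdj S a b) (hbc : MeshAdj S b c) : DivConnected S a c := by
  obtain ⟨ha, hb, x, rfl⟩ := hab
  obtain ⟨hc, -, y, rfl⟩ := hbc.symm
  exact DivConnected.equivalence.rel_of_fourCycle (squareNbr b) (cornerInterior S b)
    (fun _ => divConnected_squareNbr_succ) (h.interiorVertex_antidiag_of_diag hb)
    (h.interiorVertex_diag_of_antidiag hb) (h.cornerInterior_of_squareNbr_mem hb ha)
    (h.cornerInterior_of_squareNbr_mem hb hc)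

theorem divConnected_of_reflTransGen (h : Standing S) {a c : ℤ × ℤ}
    (hac : Relation.ReflTransGen (Relation.Comp (MeshAdj S) (MeshAdj S)) a c) :
    DivConnected S a c := by
  induction hac with
  | refl => exact DivConnected.equivalence.refl _
  | tail _ hstep ih =>
    obtain ⟨b, hab, hbc⟩ := hstep
    exact DivConnected.equivalence.trans ih (h.divConnected_of_meshAdj_of_meshAdj hab hbc)

end Standing

section Topology

open Set

theorem eq_of_mem_Icc_of_mem_Ioo {m n : ℤ} {t : ℝ} (hm : t ∈ Icc (m : ℝ) (m + 1))
    (hn : t ∈ Ioo (n : ℝ) (n + 1)) : m = n := by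
  have h1 : m < n + 1 := by exact_mod_cast hm.1.trans_lt hn.2
  have h2 : n < m + 1 := by exact_mod_cast hn.1.trans_le hm.2
  omega

theorem le_add_one_of_mem_Icc {m n : ℤ} {t : ℝ} (hm : t ∈ Icc (m : ℝ) (m + 1))
    (hn : t ∈ Icc (n : ℝ) (n + 1)) : m ≤ n + 1 := by
  exact_mod_cast hm.1.trans hn.2

theorem interior_unitSq (q : ℤ × ℤ) :
    interior (unitSq q) = Ioo (q.1 : ℝ) (q.1 + 1) ×ˢ Ioo (q.2 : ℝ) (q.2 + 1) := by
  rw [unitSq, interior_prod_eq, interior_Icc, interior_Icc]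

theorem closure_interior_unitSq (q : ℤ × ℤ) : closure (interior (unitSq q)) = unitSq q := by
  rw [interior_unitSq, closure_prod_eq, closure_Ioo, closure_Ioo, unitSq] <;> simp

variable {S : Finset (ℤ × ℤ)}

theorem interior_meshRegion_inter_unitSq_nonempty {q : ℤ × ℤ} (hq : q ∈ S) :
    (interior (meshRegion S) ∩ unitSq q).Nonempty := by
  have hc : ((q.1 : ℝ) + 1 / 2, (q.2 : ℝ) + 1 / 2) ∈ interior (unitSq q) := by
    rw [interior_unitSq]; constructor <;> constructor <;> linarith
  exact ⟨_, interior_mono (subset_biUnion_of_mem hq) hc, interior_subset hc⟩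

theorem mem_of_mem_interior_of_mem_unitSq {x : ℝ × ℝ} {q : ℤ × ℤ}
    (hx : x ∈ interior (meshRegion S)) (hq : x ∈ unitSq q) : q ∈ S := by
  rw [← closure_interior_unitSq] at hq
  obtain ⟨y, hyS, hyq⟩ := mem_closure_iff.1 hq _ isOpen_interior hx
  obtain ⟨r, hr, hyr⟩ := mem_iUnion₂.1 (interior_subset hyS)
  rw [interior_unitSq] at hyq
  obtain rfl : r = q :=
    Prod.ext (eq_of_mem_Icc_of_mem_Ioo hyr.1 hyq.1) (eq_of_mem_Icc_of_mem_Ioo hyr.2 hyq.2)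
  exact hr

theorem reflTransGen_meshAdj_of_close {a b : ℤ × ℤ} (ha : a ∈ S) (hb : b ∈ S)
    (h1 : a.1 ≤ b.1 + 1) (h2 : b.1 ≤ a.1 + 1) (h3 : a.2 ≤ b.2 + 1) (h4 : b.2 ≤ a.2 + 1)
    (hab : a.1 = b.1 ∨ a.2 = b.2) : Relation.ReflTransGen (MeshAdj S) a b := by
  obtain ⟨a1, a2⟩ := a
  obtain ⟨b1, b2⟩ := b
  have : (a1 = b1 ∧ a2 = b2) ∨ ∃ k, (a1, a2) = squareNbr (b1, b2) k := by
    simp [squareNbr, Fin.exists_fin_succ]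
    omega
  rcases this with ⟨rfl, rfl⟩ | hk
  · exact .refl
  · exact .single ⟨ha, hb, hk⟩

theorem reflTransGen_meshAdj_of_mem_unitSq {x : ℝ × ℝ} {r r' : ℤ × ℤ}
    (hx : x ∈ interior (meshRegion S)) (hr : r ∈ S) (hr' : r' ∈ S)
    (hxr : x ∈ unitSq r) (hxr' : x ∈ unitSq r') : Relation.ReflTransGen (MeshAdj S) r r' := by
  -- `(r'.1, r.2)` also contains `x`, and is equal or edge-adjacent to both `r` and `r'`
  have hm : (r'.1, r.2) ∈ S := mem_of_mem_interior_of_mem_unitSq hx ⟨hxr'.1, hxr.2⟩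
  have h1 := le_add_one_of_mem_Icc hxr.1 hxr'.1
  have h2 := le_add_one_of_mem_Icc hxr'.1 hxr.1
  have h3 := le_add_one_of_mem_Icc hxr.2 hxr'.2
  have h4 := le_add_one_of_mem_Icc hxr'.2 hxr.2
  exact (reflTransGen_meshAdj_of_close hr hm h1 h2 (by simp) (by simp) (.inr rfl)).trans
    (reflTransGen_meshAdj_of_close hm hr' (by simp) (by simp) h3 h4 (.inl rfl))

theorem reflTransGen_meshAdj_of_isPreconnected (hS : IsPreconnected (interior (meshRegion S)))
    {Q Q' : ℤ × ℤ} (hQ : Q ∈ S) (hQ' : Q' ∈ S) : Relation.ReflTransGen (MeshAdj S) Q Q' := by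
  classical
  by_contra hQQ'
  have hcover : interior (meshRegion S) ⊆
      (⋃ r ∈ S.filter (Relation.ReflTransGen (MeshAdj S) Q), unitSq r) ∪
        ⋃ r ∈ S.filter (¬ Relation.ReflTransGen (MeshAdj S) Q ·), unitSq r := by
    intro x hx
    obtain ⟨r, hr, hxr⟩ := mem_iUnion₂.1 (interior_subset hx)
    by_cases hQr : Relation.ReflTransGen (MeshAdj S) Q r
    · exact .inl (mem_biUnion (Finset.mem_filter.2 ⟨hr, hQr⟩) hxr)
    · exact .inr (mem_biUnion (Finset.mem_filter.2 ⟨hr, hQr⟩) hxr)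
  obtain ⟨x, hx, hxT, hxT'⟩ := isPreconnected_closed_iff.1 hS _ _
    (isClosed_biUnion_finset fun _ _ => isClosed_Icc.prod isClosed_Icc)
    (isClosed_biUnion_finset fun _ _ => isClosed_Icc.prod isClosed_Icc) hcover
    ((interior_meshRegion_inter_unitSq_nonempty hQ).mono
      (inter_subset_inter_right _ (subset_biUnion_of_mem (Finset.mem_filter.2 ⟨hQ, .refl⟩))))
    ((interior_meshRegion_inter_unitSq_nonempty hQ').mono
      (inter_subset_inter_right _ (subset_biUnion_of_mem (Finset.mem_filter.2 ⟨hQ', hQQ'⟩))))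
  obtain ⟨r, hr, hxr⟩ := mem_iUnion₂.1 hxT
  obtain ⟨r', hr', hxr'⟩ := mem_iUnion₂.1 hxT'
  rw [Finset.mem_filter] at hr hr'
  exact hr'.2 (hr.2.trans (reflTransGen_meshAdj_of_mem_unitSq hx hr.1 hr'.1 hxr hxr'))

end Topology

/-- Under the standing assumptions, for any two distinct squares `Q, Q'` of
`S` of the same color there exists `c : ℤ × ℤ → ℝ × ℝ` supported on the interior vertices such
that `(Dc)(Q) = 1`, `(Dc)(Q') = −1`, and `(Dc)(Q'') = 0` for every other square `Q''` of `S`. -/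
theorem exists_div_indicator (S : Finset (ℤ × ℤ)) (h : Standing S)
    (Q Q' : ℤ × ℤ) (hQ : Q ∈ S) (hQ' : Q' ∈ S) (hne : Q ≠ Q')
    (hcolor : isRed Q ↔ isRed Q') :
    ∃ c : ℤ × ℤ → ℝ × ℝ, (∀ v : ℤ × ℤ, ¬ interiorVertex S v → c v = 0) ∧
      Ddiv c Q = 1 ∧ Ddiv c Q' = -1 ∧
      ∀ q ∈ S, q ≠ Q → q ≠ Q' → Ddiv c q = 0 := by
  have hpath := (reflTransGen_meshAdj_of_isPreconnected h.connected.isPreconnected hQ hQ')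
    |>.comp_self_of_iff_not (fun _ _ hab => hab.isRed_iff_not) hcolor
  obtain ⟨c, hsupp, hdiv⟩ := h.divConnected_of_reflTransGen hpath
  refine ⟨c, hsupp, ?_, ?_, fun q _ hq hq' => ?_⟩
  · simp [hdiv, hne]
  · simp [hdiv, hne.symm]
  · simp [hdiv, hq, hq']
end

section
/- Under the standing assumptions, the image of the linear map c ↦ Dc, defined on the space of functions c : ℤ×ℤ → ℝ×ℝ supported on the interior vertices, is exactly the space {q : S → ℝ : Σ_{Q∈S, Q red} q(Q) = 0 and Σ_{Q∈S, Q black} q(Q) = 0}. -/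
section Fwd
variable (S : Finset (ℤ × ℤ))

open Classical in
lemma sum_filter_int (u : ℤ × ℤ → ℝ) (hu : ∀ v, ¬ interiorVertex S v → u v = 0)
    (A : Finset (ℤ × ℤ)) :
    ∑ v ∈ A, u v = ∑ v ∈ A.filter (fun v => interiorVertex S v), u v :=
  (Finset.sum_filter_of_ne (by intro x _ hx; by_contra hic; exact hx (hu x hic))).symm

open Classical in
lemma sum_shift_eq (u : ℤ × ℤ → ℝ) (hu : ∀ v, ¬ interiorVertex S v → u v = 0)
    (T : Finset (ℤ × ℤ)) (σ τ : ℤ × ℤ → ℤ × ℤ)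
    (hσ : Function.Injective σ) (hτ : Function.Injective τ)
    (hiff : ∀ v, interiorVertex S v → (v ∈ T.image σ ↔ v ∈ T.image τ)) :
    ∑ q ∈ T, u (σ q) = ∑ q ∈ T, u (τ q) := by
  rw [← Finset.sum_image (fun a _ b _ h => hσ h), ← Finset.sum_image (fun a _ b _ h => hτ h),
    sum_filter_int S u hu (T.image σ), sum_filter_int S u hu (T.image τ)]
  congr 1
  ext v
  simp only [Finset.mem_filter]
  exact ⟨fun ⟨hv, hi⟩ => ⟨(hiff v hi).1 hv, hi⟩, fun ⟨hv, hi⟩ => ⟨(hiff v hi).2 hv, hi⟩⟩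
end Fwd
section Fwd2
variable (S : Finset (ℤ × ℤ))

lemma fwd_sum (c : ℤ × ℤ → ℝ × ℝ) (hc : ∀ v, ¬ interiorVertex S v → c v = 0)
    (P : ℤ × ℤ → Prop) [DecidablePred P]
    (hP : ∀ v w : ℤ × ℤ, (v.1 + v.2) % 2 = (w.1 + w.2) % 2 → (P v ↔ P w)) :
    ∑ q ∈ S.filter P, Ddiv c q = 0 := by
  classical
  set u : ℤ × ℤ → ℝ := fun v => (c v).1 + (c v).2 with hudef
  set w : ℤ × ℤ → ℝ := fun v => (c v).1 - (c v).2 with hwdef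
  have hu : ∀ v, ¬ interiorVertex S v → u v = 0 := fun v hv => by
    simp [hudef, hc v hv]
  have hw : ∀ v, ¬ interiorVertex S v → w v = 0 := fun v hv => by
    simp [hwdef, hc v hv]
  have expand : ∀ q : ℤ × ℤ, Ddiv c q =
      (u ((fun p : ℤ × ℤ => (p.1 + 1, p.2 + 1)) q) - u (id q)) +
      (w ((fun p : ℤ × ℤ => (p.1 + 1, p.2)) q) - w ((fun p : ℤ × ℤ => (p.1, p.2 + 1)) q)) := by
    intro q
    simp only [Ddiv, dX, dY, hudef, hwdef, id]
    ring
  rw [Finset.sum_congr rfl (fun q _ => expand q), Finset.sum_add_distrib,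
    Finset.sum_sub_distrib, Finset.sum_sub_distrib]
  have inj11 : Function.Injective (fun p : ℤ × ℤ => (p.1 + 1, p.2 + 1)) := by
    intro a b hab
    simp only [Prod.mk.injEq, Prod.ext_iff] at hab ⊢
    omega
  have inj10 : Function.Injective (fun p : ℤ × ℤ => (p.1 + 1, p.2)) := by
    intro a b hab
    simp only [Prod.mk.injEq, Prod.ext_iff] at hab ⊢
    omega
  have inj01 : Function.Injective (fun p : ℤ × ℤ => (p.1, p.2 + 1)) := by
    intro a b hab
    simp only [Prod.mk.injEq, Prod.ext_iff] at hab ⊢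
    omega
  have injid : Function.Injective (id : ℤ × ℤ → ℤ × ℤ) := fun a b hab => hab
  have mem_img : ∀ (σ : ℤ × ℤ → ℤ × ℤ) (hσ : Function.Injective σ) (v a : ℤ × ℤ),
      σ a = v → (v ∈ (S.filter P).image σ ↔ a ∈ S.filter P) := by
    intro σ hσ v a ha
    subst ha
    simp only [Finset.mem_image]
    exact ⟨fun ⟨b, hb, hba⟩ => hσ hba ▸ hb, fun hb => ⟨a, hb, rfl⟩⟩
  have e1 : ∑ q ∈ S.filter P, u ((fun p : ℤ × ℤ => (p.1 + 1, p.2 + 1)) q)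
      = ∑ q ∈ S.filter P, u (id q) := by
    apply sum_shift_eq S u hu _ _ _ inj11 injid
    intro v hv
    rw [mem_img _ inj11 v (v.1 - 1, v.2 - 1) (by simp), mem_img _ injid v v rfl]
    simp only [Finset.mem_filter]
    have h1 : (v.1 - 1, v.2 - 1) ∈ S := hv.1
    have h2 : v ∈ S := hv.2.2.2
    have hp : P (v.1 - 1, v.2 - 1) ↔ P v := hP _ _ (by simp; omega)
    tauto
  have e2 : ∑ q ∈ S.filter P, w ((fun p : ℤ × ℤ => (p.1 + 1, p.2)) q)
      = ∑ q ∈ S.filter P, w ((fun p : ℤ × ℤ => (p.1, p.2 + 1)) q) := by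
    apply sum_shift_eq S w hw _ _ _ inj10 inj01
    intro v hv
    rw [mem_img _ inj10 v (v.1 - 1, v.2) (by simp), mem_img _ inj01 v (v.1, v.2 - 1) (by simp)]
    simp only [Finset.mem_filter]
    have h1 : (v.1 - 1, v.2) ∈ S := hv.2.1
    have h2 : (v.1, v.2 - 1) ∈ S := hv.2.2.1
    have hp : P (v.1 - 1, v.2) ↔ P (v.1, v.2 - 1) := hP _ _ (by simp; omega)
    tauto
  rw [e1, e2]
  ring
end Fwd2
section Elem
variable (S : Finset (ℤ × ℤ))

/-- indicator -/
noncomputable def ind (a q : ℤ × ℤ) : ℝ := if q = a then 1 else 0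

noncomputable def cU (v : ℤ × ℤ) : ℤ × ℤ → ℝ × ℝ :=
  fun x => if x = v then ((1:ℝ)/2, (1:ℝ)/2) else 0

noncomputable def cW (v : ℤ × ℤ) : ℤ × ℤ → ℝ × ℝ :=
  fun x => if x = v then ((1:ℝ)/2, -(1:ℝ)/2) else 0

lemma Ddiv_cU (v q : ℤ × ℤ) : Ddiv (cU v) q = ind (v.1 - 1, v.2 - 1) q - ind v q := by
  obtain ⟨x, y⟩ := q; obtain ⟨a, b⟩ := v
  simp only [Ddiv, dX, dY, cU, ind]
  split_ifs <;> first | (exfalso; simp only [Prod.mk.injEq] at *; omega) | norm_num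

lemma Ddiv_cW (v q : ℤ × ℤ) : Ddiv (cW v) q = ind (v.1 - 1, v.2) q - ind (v.1, v.2 - 1) q := by
  obtain ⟨x, y⟩ := q; obtain ⟨a, b⟩ := v
  simp only [Ddiv, dX, dY, cW, ind]
  split_ifs <;> first | (exfalso; simp only [Prod.mk.injEq] at *; omega) | norm_num

/-- diagonal adjacency through an interior vertex -/
def dadj (a b : ℤ × ℤ) : Prop :=
  ∃ v : ℤ × ℤ, interiorVertex S v ∧
    ((a = (v.1 - 1, v.2 - 1) ∧ b = v) ∨ (a = (v.1 - 1, v.2) ∧ b = (v.1, v.2 - 1)))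

def dlink (a b : ℤ × ℤ) : Prop := dadj S a b ∨ dadj S b a

def dreach : ℤ × ℤ → ℤ × ℤ → Prop := Relation.ReflTransGen (dlink S)

lemma dadj_sol {a b : ℤ × ℤ} (h : dadj S a b) :
    ∃ c : ℤ × ℤ → ℝ × ℝ, (∀ v, ¬ interiorVertex S v → c v = 0) ∧
      ∀ q, Ddiv c q = ind a q - ind b q := by
  obtain ⟨v, hv, hcase⟩ := h
  rcases hcase with ⟨ha, hb⟩ | ⟨ha, hb⟩
  · exact ⟨cU v, fun x hx => by simp [cU]; intro hxv; exact absurd (hxv ▸ hv) hx,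
      fun q => by rw [Ddiv_cU, ha, hb]⟩
  · exact ⟨cW v, fun x hx => by simp [cW]; intro hxv; exact absurd (hxv ▸ hv) hx,
      fun q => by rw [Ddiv_cW, ha, hb]⟩

lemma Ddiv_add_s12 (c₁ c₂ : ℤ × ℤ → ℝ × ℝ) (q : ℤ × ℤ) :
    Ddiv (fun v => c₁ v + c₂ v) q = Ddiv c₁ q + Ddiv c₂ q := by
  simp only [Ddiv, dX, dY, Prod.fst_add, Prod.snd_add]; ring

lemma Ddiv_neg_s12 (c : ℤ × ℤ → ℝ × ℝ) (q : ℤ × ℤ) :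
    Ddiv (fun v => -c v) q = -Ddiv c q := by
  simp only [Ddiv, dX, dY, Prod.fst_neg, Prod.snd_neg]; ring

lemma dlink_sol {a b : ℤ × ℤ} (h : dlink S a b) :
    ∃ c : ℤ × ℤ → ℝ × ℝ, (∀ v, ¬ interiorVertex S v → c v = 0) ∧
      ∀ q, Ddiv c q = ind a q - ind b q := by
  rcases h with h | h
  · exact dadj_sol S h
  · obtain ⟨c, hc, hd⟩ := dadj_sol S h
    exact ⟨fun v => -c v, fun v hv => by show -c v = 0; rw [hc v hv]; simp,
      fun q => by rw [Ddiv_neg_s12, hd]; ring⟩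

lemma dreach_sol {a b : ℤ × ℤ} (h : dreach S a b) :
    ∃ c : ℤ × ℤ → ℝ × ℝ, (∀ v, ¬ interiorVertex S v → c v = 0) ∧
      ∀ q, Ddiv c q = ind a q - ind b q := by
  induction h with
  | refl => exact ⟨0, fun v _ => rfl, fun q => by simp [Ddiv, dX, dY]⟩
  | tail _ hbc ih =>
    obtain ⟨c₁, hc₁, hd₁⟩ := ih
    obtain ⟨c₂, hc₂, hd₂⟩ := dlink_sol S hbc
    exact ⟨fun v => c₁ v + c₂ v, fun v hv => by show c₁ v + c₂ v = 0; rw [hc₁ v hv, hc₂ v hv]; simp,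
      fun q => by rw [Ddiv_add_s12, hd₁, hd₂]; ring⟩
end Elem
section Assemble
variable (S : Finset (ℤ × ℤ))

lemma Ddiv_sum {α : Type*} (T : Finset α) (f : α → ℤ × ℤ → ℝ × ℝ) (q : ℤ × ℤ) :
    Ddiv (fun v => ∑ a ∈ T, f a v) q = ∑ a ∈ T, Ddiv (f a) q := by
  simp only [Ddiv, dX, dY, Prod.fst_sum, Prod.snd_sum, ← Finset.sum_add_distrib,
    ← Finset.sum_sub_distrib]

lemma Ddiv_smul (r : ℝ) (f : ℤ × ℤ → ℝ × ℝ) (q : ℤ × ℤ) :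
    Ddiv (fun v => r • f v) q = r * Ddiv f q := by
  simp only [Ddiv, dX, dY, Prod.smul_fst, Prod.smul_snd, smul_eq_mul]
  ring

lemma corner_interior (hS : Standing S) {q : ℤ × ℤ} (hq : q ∈ S) :
    ∃ v : ℤ × ℤ, interiorVertex S v ∧
      (v = q ∨ v = (q.1 + 1, q.2) ∨ v = (q.1, q.2 + 1) ∨ v = (q.1 + 1, q.2 + 1)) := by
  have h := hS.noFourBoundary q hq
  have m1 : meshVertex S q := Or.inr (Or.inr (Or.inr hq))
  have m2 : meshVertex S (q.1 + 1, q.2) := by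
    refine Or.inr (Or.inl ?_); simpa using hq
  have m3 : meshVertex S (q.1, q.2 + 1) := by
    refine Or.inr (Or.inr (Or.inl ?_)); simpa using hq
  have m4 : meshVertex S (q.1 + 1, q.2 + 1) := by
    refine Or.inl ?_; simpa using hq
  by_cases i1 : interiorVertex S q
  · exact ⟨q, i1, Or.inl rfl⟩
  by_cases i2 : interiorVertex S (q.1 + 1, q.2)
  · exact ⟨_, i2, Or.inr (Or.inl rfl)⟩
  by_cases i3 : interiorVertex S (q.1, q.2 + 1)
  · exact ⟨_, i3, Or.inr (Or.inr (Or.inl rfl))⟩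
  by_cases i4 : interiorVertex S (q.1 + 1, q.2 + 1)
  · exact ⟨_, i4, Or.inr (Or.inr (Or.inr rfl))⟩
  exact absurd ⟨⟨m1, i1⟩, ⟨m2, i2⟩, ⟨m3, i3⟩, ⟨m4, i4⟩⟩ h

lemma backward (hS : Standing S)
    (Hconn : ∀ a b : ℤ × ℤ, a ∈ S → b ∈ S → (a.1 + a.2) % 2 = (b.1 + b.2) % 2 →
      dreach S a b)
    (g : ℤ × ℤ → ℝ)
    (hred : (∑ q ∈ S.filter fun q => isRed q, g q) = 0)
    (hblack : (∑ q ∈ S.filter fun q => ¬ isRed q, g q) = 0) :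
    ∃ c : ℤ × ℤ → ℝ × ℝ, (∀ v : ℤ × ℤ, ¬ interiorVertex S v → c v = 0) ∧
      ∀ q ∈ S, Ddiv c q = g q := by
  classical
  obtain ⟨q₀, hq₀⟩ := hS.nonempty
  obtain ⟨v₀, hv₀, _⟩ := corner_interior S hS hq₀
  obtain ⟨r₀, b₀, hr₀S, hb₀S, hr₀red, hb₀black⟩ :
      ∃ r₀ b₀ : ℤ × ℤ, r₀ ∈ S ∧ b₀ ∈ S ∧ isRed r₀ ∧ ¬ isRed b₀ := by
    by_cases hpar : (v₀.1 + v₀.2) % 2 = 0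
    · refine ⟨v₀, (v₀.1 - 1, v₀.2), hv₀.2.2.2, hv₀.2.1, hpar, ?_⟩
      simp only [isRed]
      omega
    · refine ⟨(v₀.1 - 1, v₀.2), v₀, hv₀.2.1, hv₀.2.2.2, ?_, hpar⟩
      simp only [isRed]
      omega
  classical
  set base : ℤ × ℤ → ℤ × ℤ := fun q => if isRed q then r₀ else b₀ with hbase
  have hsol : ∀ q ∈ S, ∃ c : ℤ × ℤ → ℝ × ℝ,
      (∀ v, ¬ interiorVertex S v → c v = 0) ∧
      ∀ q' : ℤ × ℤ, Ddiv c q' = ind q q' - ind (base q) q' := by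
    intro q hq
    apply dreach_sol
    refine Hconn q (base q) hq ?_ ?_
    · simp only [hbase]
      split
      · exact hr₀S
      · exact hb₀S
    · simp only [hbase]
      by_cases hqr : isRed q
      · rw [if_pos hqr]
        have h2 := hr₀red
        simp only [isRed] at hqr h2
        omega
      · rw [if_neg hqr]
        have h2 := hb₀black
        simp only [isRed] at hqr h2
        omega
  choose! csol hcsupp hcdiv using hsol
  refine ⟨fun v => ∑ q ∈ S, g q • csol q v, fun v hv => ?_, fun q' hq' => ?_⟩
  · apply Finset.sum_eq_zero
    intro q hq
    rw [hcsupp q hq v hv, smul_zero]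
  · have : ∀ q ∈ S, Ddiv (fun v => g q • csol q v) q' =
        g q * ind q q' - g q * ind (base q) q' := by
      intro q hq
      rw [Ddiv_smul, hcdiv q hq q']
      ring
    rw [Ddiv_sum, Finset.sum_congr rfl this, Finset.sum_sub_distrib]
    have e1 : ∑ q ∈ S, g q * ind q q' = g q' := by
      rw [Finset.sum_congr rfl (fun q _ => by
        show g q * ind q q' = if q = q' then g q else 0
        simp only [ind]
        by_cases h : q = q'
        · subst h; simp
        · have h2 : ¬ (q' = q) := fun hh => h hh.symm
          simp [h, h2])]
      rw [Finset.sum_ite_eq' S q' g, if_pos hq']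
    have e2 : ∑ q ∈ S, g q * ind (base q) q' = 0 := by
      rw [← Finset.sum_filter_add_sum_filter_not S (fun q => isRed q)]
      have er : ∑ q ∈ S.filter (fun q => isRed q), g q * ind (base q) q'
          = (∑ q ∈ S.filter (fun q => isRed q), g q) * ind r₀ q' := by
        rw [Finset.sum_mul]
        apply Finset.sum_congr rfl
        intro q hq
        rw [Finset.mem_filter] at hq
        show g q * ind (base q) q' = g q * ind r₀ q'
        simp only [hbase]
        rw [if_pos hq.2]
      have eb : ∑ q ∈ S.filter (fun q => ¬ isRed q), g q * ind (base q) q'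
          = (∑ q ∈ S.filter (fun q => ¬ isRed q), g q) * ind b₀ q' := by
        rw [Finset.sum_mul]
        apply Finset.sum_congr rfl
        intro q hq
        rw [Finset.mem_filter] at hq
        show g q * ind (base q) q' = g q * ind b₀ q'
        simp only [hbase]
        rw [if_neg hq.2]
      rw [er, eb, hred, hblack]
      ring
    rw [e1, e2]
    ring
end Assemble
section Comb
variable (S : Finset (ℤ × ℤ))

/-- edge adjacency of squares -/
def eadj (a b : ℤ × ℤ) : Prop :=
  a ∈ S ∧ b ∈ S ∧ (b = (a.1 + 1, a.2) ∨ b = (a.1 - 1, a.2) ∨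
    b = (a.1, a.2 + 1) ∨ b = (a.1, a.2 - 1))

def ereach : ℤ × ℤ → ℤ × ℤ → Prop := Relation.ReflTransGen (eadj S)

lemma eadj_symm {a b : ℤ × ℤ} (h : eadj S a b) : eadj S b a := by
  obtain ⟨ha, hb, hc⟩ := h
  refine ⟨hb, ha, ?_⟩
  rcases hc with h | h | h | h <;> subst h <;> simp <;> omega

lemma ereach_symm {a b : ℤ × ℤ} (h : ereach S a b) : ereach S b a := by
  induction h with
  | refl => exact Relation.ReflTransGen.refl
  | tail _ h2 ih => exact Relation.ReflTransGen.head (eadj_symm S h2) ih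

/-- membership in the four-square cluster around a vertex v -/
def inCl (v x : ℤ × ℤ) : Prop :=
  x = (v.1 - 1, v.2 - 1) ∨ x = (v.1 - 1, v.2) ∨ x = (v.1, v.2 - 1) ∨ x = v

lemma inCl_mem {v x : ℤ × ℤ} (hv : interiorVertex S v) (hx : inCl v x) : x ∈ S := by
  rcases hx with h | h | h | h <;> subst h
  · exact hv.1
  · exact hv.2.1
  · exact hv.2.2.1
  · exact hv.2.2.2

lemma dlink_AB {v : ℤ × ℤ} (hv : interiorVertex S v) :
    dlink S (v.1 - 1, v.2 - 1) v := Or.inl ⟨v, hv, Or.inl ⟨rfl, rfl⟩⟩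

lemma dlink_CD {v : ℤ × ℤ} (hv : interiorVertex S v) :
    dlink S (v.1 - 1, v.2) (v.1, v.2 - 1) := Or.inl ⟨v, hv, Or.inr ⟨rfl, rfl⟩⟩

lemma dlink_symm' {a b : ℤ × ℤ} (h : dlink S a b) : dlink S b a :=
  h.elim Or.inr Or.inl

lemma dreach_symm {a b : ℤ × ℤ} (h : dreach S a b) : dreach S b a := by
  induction h with
  | refl => exact Relation.ReflTransGen.refl
  | tail _ h2 ih =>
    refine Relation.ReflTransGen.head ?_ ih
    rcases h2 with h2 | h2
    · exact Or.inr h2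
    · exact Or.inl h2

/-- within one cluster, same-parity squares are diagonally reachable -/
lemma cluster_dreach {v x y : ℤ × ℤ} (hv : interiorVertex S v)
    (hx : inCl v x) (hy : inCl v y) (hpar : (x.1 + x.2) % 2 = (y.1 + y.2) % 2) :
    dreach S x y := by
  have hab := dlink_AB S hv
  have hcd := dlink_CD S hv
  have hab' : dlink S v (v.1 - 1, v.2 - 1) := dlink_symm' S hab
  have hcd' : dlink S (v.1, v.2 - 1) (v.1 - 1, v.2) := dlink_symm' S hcd
  rcases hx with h | h | h | h <;> rcases hy with h' | h' | h' | h' <;> subst h <;> subst h' <;>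
    first
      | exact Relation.ReflTransGen.refl
      | exact Relation.ReflTransGen.single hab
      | exact Relation.ReflTransGen.single hcd
      | exact Relation.ReflTransGen.single hab'
      | exact Relation.ReflTransGen.single hcd'
      | (exfalso; revert hpar; simp only [Prod.fst, Prod.snd]; omega)

end Comb
section Comb2
variable (S : Finset (ℤ × ℤ))

/-- adjacency of interior vertices -/
def vadj (v w : ℤ × ℤ) : Prop :=
  interiorVertex S v ∧ interiorVertex S w ∧
    (w = (v.1 + 1, v.2) ∨ w = (v.1 - 1, v.2) ∨ w = (v.1, v.2 + 1) ∨ w = (v.1, v.2 - 1))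

def vreach : ℤ × ℤ → ℤ × ℤ → Prop := Relation.ReflTransGen (vadj S)

lemma vadj_symm {v w : ℤ × ℤ} (h : vadj S v w) : vadj S w v := by
  obtain ⟨h1, h2, h3⟩ := h
  refine ⟨h2, h1, ?_⟩
  rcases h3 with h | h | h | h <;> subst h <;> simp <;> omega

/-- clusters of adjacent interior vertices share a square of each parity;
    hence same-parity cluster members are dreach-connected across a vadj step -/
lemma vadj_cluster_dreach {v w x y : ℤ × ℤ} (h : vadj S v w)
    (hx : inCl v x) (hy : inCl w y) (hpar : (x.1 + x.2) % 2 = (y.1 + y.2) % 2) :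
    dreach S x y := by
  obtain ⟨hv, hw, hd⟩ := h
  -- find a common square z in both clusters with parity equal to x's parity
  have key : ∃ z : ℤ × ℤ, inCl v z ∧ inCl w z ∧ (z.1 + z.2) % 2 = (x.1 + x.2) % 2 := by
    rcases hd with h | h | h | h <;> subst h
    · -- w = v + (1,0); common squares: (v.1, v.2 - 1) = w - (1,1), v = w - (1,0)
      by_cases hp : (v.1 + v.2) % 2 = (x.1 + x.2) % 2
      · exact ⟨v, Or.inr (Or.inr (Or.inr rfl)), Or.inr (Or.inl (by simp)), hp⟩
      · refine ⟨(v.1, v.2 - 1), Or.inr (Or.inr (Or.inl rfl)), Or.inl (by simp), ?_⟩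
        have hxp : (x.1 + x.2) % 2 = 0 ∨ (x.1 + x.2) % 2 = 1 := by omega
        simp only [Prod.fst, Prod.snd]
        omega
    · -- w = v - (1,0): v's cluster ∩ w's cluster: (v.1 - 1, v.2 - 1) = w + (0,-1)... 
      by_cases hp : ((v.1 - 1) + v.2) % 2 = (x.1 + x.2) % 2
      · exact ⟨(v.1 - 1, v.2), Or.inr (Or.inl rfl), Or.inr (Or.inr (Or.inr (by simp))), hp⟩
      · refine ⟨(v.1 - 1, v.2 - 1), Or.inl rfl, Or.inr (Or.inr (Or.inl (by simp))), ?_⟩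
        simp only [Prod.fst, Prod.snd] at *
        omega
    · -- w = v + (0,1); common: (v.1 - 1, v.2) = w - (1,1), v = w - (0,1)
      by_cases hp : (v.1 + v.2) % 2 = (x.1 + x.2) % 2
      · exact ⟨v, Or.inr (Or.inr (Or.inr rfl)), Or.inr (Or.inr (Or.inl (by simp))), hp⟩
      · refine ⟨(v.1 - 1, v.2), Or.inr (Or.inl rfl), Or.inl (by simp), ?_⟩
        simp only [Prod.fst, Prod.snd] at *
        omega
    · -- w = v - (0,1); common: (v.1 - 1, v.2 - 1) = w - (1,0), (v.1, v.2 - 1) = w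
      by_cases hp : ((v.1 - 1) + (v.2 - 1)) % 2 = (x.1 + x.2) % 2
      · exact ⟨(v.1 - 1, v.2 - 1), Or.inl rfl, Or.inr (Or.inl (by simp)), hp⟩
      · refine ⟨(v.1, v.2 - 1), Or.inr (Or.inr (Or.inl rfl)), Or.inr (Or.inr (Or.inr (by simp))), ?_⟩
        simp only [Prod.fst, Prod.snd] at *
        omega
  obtain ⟨z, hzv, hzw, hzp⟩ := key
  exact Relation.ReflTransGen.trans (cluster_dreach S hv hx hzv hzp.symm)
    (cluster_dreach S hw hzw hy (hzp.trans hpar))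

/-- every cluster has a square of each parity -/
lemma cluster_parity (v : ℤ × ℤ) (p : ℤ) :
    ∃ z : ℤ × ℤ, inCl v z ∧ (z.1 + z.2) % 2 = p % 2 := by
  by_cases hp : (v.1 + v.2) % 2 = p % 2
  · exact ⟨v, Or.inr (Or.inr (Or.inr rfl)), hp⟩
  · refine ⟨(v.1 - 1, v.2), Or.inr (Or.inl rfl), ?_⟩
    simp only [Prod.fst, Prod.snd]
    omega

lemma vreach_cluster_dreach {v w x y : ℤ × ℤ} (h : vreach S v w)
    (hv : interiorVertex S v)
    (hx : inCl v x) (hy : inCl w y) (hpar : (x.1 + x.2) % 2 = (y.1 + y.2) % 2) :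
    dreach S x y := by
  induction h generalizing y with
  | refl => exact cluster_dreach S hv hx hy hpar
  | @tail m w hvm hmw ih =>
    obtain ⟨z, hz, hzp⟩ := cluster_parity m (x.1 + x.2)
    exact Relation.ReflTransGen.trans (ih hz hzp.symm)
      (vadj_cluster_dreach S hmw hz hy (hzp.trans hpar))
end Comb2
section Comb3
variable (S : Finset (ℤ × ℤ))

def isCorner (q v : ℤ × ℤ) : Prop :=
  v = q ∨ v = (q.1 + 1, q.2) ∨ v = (q.1, q.2 + 1) ∨ v = (q.1 + 1, q.2 + 1)

lemma vreach_symm {v w : ℤ × ℤ} (h : vreach S v w) : vreach S w v := by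
  induction h with
  | refl => exact Relation.ReflTransGen.refl
  | tail _ h2 ih => exact Relation.ReflTransGen.head (vadj_symm S h2) ih

lemma corner_mesh {q v : ℤ × ℤ} (hq : q ∈ S) (hc : isCorner q v) : meshVertex S v := by
  rcases hc with h | h | h | h <;> subst h
  · exact Or.inr (Or.inr (Or.inr hq))
  · exact Or.inr (Or.inl (by simpa using hq))
  · exact Or.inr (Or.inr (Or.inl (by simpa using hq)))
  · exact Or.inl (by simpa using hq)

lemma isCorner_inCl {q v : ℤ × ℤ} (hc : isCorner q v) : inCl v q := by
  rcases hc with h | h | h | h <;> subst h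
  · exact Or.inr (Or.inr (Or.inr rfl))
  · exact Or.inr (Or.inl (by simp))
  · exact Or.inr (Or.inr (Or.inl (by simp)))
  · exact Or.inl (by simp)

lemma corners_vreach (hS : Standing S) {q v v' : ℤ × ℤ} (hq : q ∈ S)
    (hv : interiorVertex S v) (hv' : interiorVertex S v')
    (hc : isCorner q v) (hc' : isCorner q v') : vreach S v v' := by
  -- diagonal case helper, main diagonal
  have diag : interiorVertex S q → interiorVertex S (q.1 + 1, q.2 + 1) →
      vreach S q (q.1 + 1, q.2 + 1) := by
    intro h1 h4
    have hnd := hS.noDiagTwo q hq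
    by_cases i2 : interiorVertex S (q.1 + 1, q.2)
    · exact Relation.ReflTransGen.trans
        (Relation.ReflTransGen.single ⟨h1, i2, Or.inl rfl⟩)
        (Relation.ReflTransGen.single ⟨i2, h4, Or.inr (Or.inr (Or.inl (by simp)))⟩)
    · by_cases i3 : interiorVertex S (q.1, q.2 + 1)
      · exact Relation.ReflTransGen.trans
          (Relation.ReflTransGen.single ⟨h1, i3, Or.inr (Or.inr (Or.inl rfl))⟩)
          (Relation.ReflTransGen.single ⟨i3, h4, Or.inl (by simp)⟩)
      · exact absurd ⟨⟨corner_mesh S hq (Or.inr (Or.inl rfl)), i2⟩,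
          ⟨corner_mesh S hq (Or.inr (Or.inr (Or.inl rfl))), i3⟩, h1, h4⟩ hnd
  -- antidiagonal case helper
  have adiag : interiorVertex S (q.1 + 1, q.2) → interiorVertex S (q.1, q.2 + 1) →
      vreach S (q.1 + 1, q.2) (q.1, q.2 + 1) := by
    intro h2 h3
    have hnd := hS.noDiagOne q hq
    by_cases i1 : interiorVertex S q
    · exact Relation.ReflTransGen.trans
        (Relation.ReflTransGen.single ⟨h2, i1, Or.inr (Or.inl (by simp))⟩)
        (Relation.ReflTransGen.single ⟨i1, h3, Or.inr (Or.inr (Or.inl rfl))⟩)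
    · by_cases i4 : interiorVertex S (q.1 + 1, q.2 + 1)
      · exact Relation.ReflTransGen.trans
          (Relation.ReflTransGen.single ⟨h2, i4, Or.inr (Or.inr (Or.inl (by simp)))⟩)
          (Relation.ReflTransGen.single ⟨i4, h3, Or.inr (Or.inl (by simp <;> omega))⟩)
      · exact absurd ⟨⟨corner_mesh S hq (Or.inl rfl), i1⟩,
          ⟨corner_mesh S hq (Or.inr (Or.inr (Or.inr rfl))), i4⟩, h2, h3⟩ hnd
  rcases hc with h | h | h | h <;> rcases hc' with h' | h' | h' | h' <;> subst h <;> subst h' <;>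
    first
      | exact Relation.ReflTransGen.refl
      | exact diag hv hv'
      | exact vreach_symm S (diag hv' hv)
      | exact adiag hv hv'
      | exact vreach_symm S (adiag hv' hv)
      | exact Relation.ReflTransGen.single ⟨hv, hv', by simp [Prod.ext_iff] <;> try omega⟩
end Comb3
section Comb4
variable (S : Finset (ℤ × ℤ))

/-- across an edge-adjacency there is a shared interior corner -/
lemma shared_corner (hS : Standing S) {m b : ℤ × ℤ} (h : eadj S m b) :
    ∃ w : ℤ × ℤ, interiorVertex S w ∧ isCorner m w ∧ isCorner b w := by
  obtain ⟨hm, hb, hd⟩ := h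
  rcases hd with h | h | h | h <;> subst h
  · -- b = (m.1+1, m.2), shared vertical edge; edgeV at v := b
    rcases hS.edgeV (m.1 + 1, m.2) hb (by simpa using hm) with hw | hw
    · exact ⟨(m.1 + 1, m.2), hw, Or.inr (Or.inl rfl), Or.inl rfl⟩
    · refine ⟨(m.1 + 1, m.2 + 1), by simpa using hw, Or.inr (Or.inr (Or.inr rfl)), ?_⟩
      exact Or.inr (Or.inr (Or.inl (by simp)))
  · -- b = (m.1-1, m.2); edgeV at v := m
    rcases hS.edgeV m hm (by simpa using hb) with hw | hw
    · exact ⟨m, hw, Or.inl rfl, Or.inr (Or.inl (by simp [Prod.ext_iff] <;> omega))⟩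
    · exact ⟨(m.1, m.2 + 1), hw, Or.inr (Or.inr (Or.inl rfl)),
        Or.inr (Or.inr (Or.inr (by simp [Prod.ext_iff] <;> omega)))⟩
  · -- b = (m.1, m.2+1); edgeH at v := b
    rcases hS.edgeH (m.1, m.2 + 1) hb (by simpa using hm) with hw | hw
    · exact ⟨(m.1, m.2 + 1), hw, Or.inr (Or.inr (Or.inl rfl)), Or.inl rfl⟩
    · refine ⟨(m.1 + 1, m.2 + 1), by simpa using hw, Or.inr (Or.inr (Or.inr rfl)), ?_⟩
      exact Or.inr (Or.inl (by simp))
  · -- b = (m.1, m.2-1); edgeH at v := m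
    rcases hS.edgeH m hm (by simpa using hb) with hw | hw
    · exact ⟨m, hw, Or.inl rfl, Or.inr (Or.inr (Or.inl (by simp [Prod.ext_iff] <;> omega)))⟩
    · exact ⟨(m.1 + 1, m.2), hw, Or.inr (Or.inl rfl),
        Or.inr (Or.inr (Or.inr (by simp [Prod.ext_iff] <;> omega)))⟩

lemma ereach_vreach (hS : Standing S) {a b : ℤ × ℤ} (h : ereach S a b)
    {va vb : ℤ × ℤ} (ha : a ∈ S) (hb : b ∈ S)
    (hva : interiorVertex S va) (hca : isCorner a va)
    (hvb : interiorVertex S vb) (hcb : isCorner b vb) : vreach S va vb := by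
  induction h generalizing vb with
  | refl => exact corners_vreach S hS ha hva hvb hca hcb
  | @tail m b' hm hmb ih =>
    obtain ⟨w, hw, hwm, hwb⟩ := shared_corner S hS hmb
    have hmS : m ∈ S := hmb.1
    have hbS : b' ∈ S := hmb.2.1
    exact Relation.ReflTransGen.trans (ih hmS hw hwm)
      (corners_vreach S hS hbS hw hvb hwb hcb)

/-- main combinatorial bridge -/
lemma ereach_dreach (hS : Standing S) {a b : ℤ × ℤ} (ha : a ∈ S) (hb : b ∈ S)
    (h : ereach S a b) (hpar : (a.1 + a.2) % 2 = (b.1 + b.2) % 2) :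
    dreach S a b := by
  obtain ⟨va, hva, hca⟩ := corner_interior S hS ha
  obtain ⟨vb, hvb, hcb⟩ := corner_interior S hS hb
  have hvr := ereach_vreach S hS h ha hb hva hca hvb hcb
  exact vreach_cluster_dreach S hvr hva (isCorner_inCl hca) (isCorner_inCl hcb) hpar
end Comb4
section Topo
variable (S : Finset (ℤ × ℤ))

lemma int_sand {z w : ℤ} {δ : ℝ} (h0 : 0 < δ) (h1 : δ < 1)
    (hl : (z:ℝ) ≤ (w:ℝ) + δ) (hr : (w:ℝ) + δ ≤ (z:ℝ) + 1) : z = w := by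
  have h2 : z < w + 1 := by exact_mod_cast show (z:ℝ) < ((w+1:ℤ):ℝ) by push_cast; linarith
  have h3 : w < z + 1 := by exact_mod_cast show (w:ℝ) < ((z+1:ℤ):ℝ) by push_cast; linarith
  omega

lemma int_sand_neg {z w : ℤ} {δ : ℝ} (h0 : 0 < δ) (h1 : δ < 1)
    (hl : (z:ℝ) ≤ (w:ℝ) - δ) (hr : (w:ℝ) - δ ≤ (z:ℝ) + 1) : z = w - 1 := by
  have h2 : z < w := by exact_mod_cast show (z:ℝ) < ((w:ℤ):ℝ) by push_cast; linarith
  have h3 : w < z + 2 := by exact_mod_cast show (w:ℝ) < ((z+2:ℤ):ℝ) by push_cast; linarith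
  omega

lemma isClosed_meshRegion (T : Finset (ℤ × ℤ)) : IsClosed (meshRegion T) :=
  Set.Finite.isClosed_biUnion (T.finite_toSet)
    (fun q _ => (isClosed_Icc.prod isClosed_Icc))

lemma mem_unitSq {p : ℝ × ℝ} {q : ℤ × ℤ} :
    p ∈ unitSq q ↔ ((q.1:ℝ) ≤ p.1 ∧ p.1 ≤ q.1 + 1) ∧ ((q.2:ℝ) ≤ p.2 ∧ p.2 ≤ q.2 + 1) := by
  constructor
  · intro hp; exact ⟨⟨hp.1.1, hp.1.2⟩, hp.2.1, hp.2.2⟩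
  · intro hp; exact ⟨⟨hp.1.1, hp.1.2⟩, hp.2.1, hp.2.2⟩

lemma mem_meshRegion {p : ℝ × ℝ} {T : Finset (ℤ × ℤ)} :
    p ∈ meshRegion T ↔ ∃ q ∈ T, p ∈ unitSq q := by
  simp [meshRegion]

lemma vertex_int {x y : ℤ} (h : ((((x:ℤ):ℝ), ((y:ℤ):ℝ)) : ℝ × ℝ) ∈ interior (meshRegion S)) :
    interiorVertex S (x, y) := by
  rw [mem_interior_iff_mem_nhds, Metric.mem_nhds_iff] at h
  obtain ⟨ε, hε, hball⟩ := h
  set δ : ℝ := min (ε/2) (1/2) with hδ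
  have hδ0 : 0 < δ := lt_min (by linarith) (by norm_num)
  have hδ1 : δ < 1 := lt_of_le_of_lt (min_le_right _ _) (by norm_num)
  have hδε : δ < ε := lt_of_le_of_lt (min_le_left _ _) (by linarith)
  have probe : ∀ s t : ℝ, |s| < ε → |t| < ε →
      ∃ q ∈ S, ((x:ℝ) + s, (y:ℝ) + t) ∈ unitSq q := by
    intro s t hs ht
    have hmem : (((x:ℝ) + s, (y:ℝ) + t) : ℝ × ℝ) ∈ Metric.ball (((x:ℝ), (y:ℝ)) : ℝ × ℝ) ε := by
      rw [Metric.mem_ball, Prod.dist_eq]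
      apply max_lt
      · simpa [Real.dist_eq] using hs
      · simpa [Real.dist_eq] using ht
    exact mem_meshRegion.mp (hball hmem)
  have habs : |δ| < ε := by rw [abs_of_pos hδ0]; exact hδε
  have habs' : |(-δ)| < ε := by rw [abs_neg]; exact habs
  have get : ∀ s t : ℝ, (s = δ ∨ s = -δ) → (t = δ ∨ t = -δ) →
      ∃ q ∈ S, ((x:ℝ) + s, (y:ℝ) + t) ∈ unitSq q := by
    intro s t hs ht
    apply probe <;> [rcases hs with h | h; rcases ht with h | h] <;> subst h <;>
      first | exact habs | exact habs'
  -- (x, y) ∈ S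
  have m4 : (x, y) ∈ S := by
    obtain ⟨q, hq, hm⟩ := get δ δ (Or.inl rfl) (Or.inl rfl)
    rw [mem_unitSq] at hm
    dsimp only at hm
    have e1 : q.1 = x := int_sand hδ0 hδ1 hm.1.1 hm.1.2
    have e2 : q.2 = y := int_sand hδ0 hδ1 hm.2.1 hm.2.2
    have : q = (x, y) := Prod.ext e1 e2
    rwa [this] at hq
  have m1 : (x - 1, y - 1) ∈ S := by
    obtain ⟨q, hq, hm⟩ := get (-δ) (-δ) (Or.inr rfl) (Or.inr rfl)
    rw [mem_unitSq] at hm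
    dsimp only at hm
    have e1 : q.1 = x - 1 := int_sand_neg hδ0 hδ1 (by linarith [hm.1.1]) (by linarith [hm.1.2])
    have e2 : q.2 = y - 1 := int_sand_neg hδ0 hδ1 (by linarith [hm.2.1]) (by linarith [hm.2.2])
    have : q = (x - 1, y - 1) := Prod.ext e1 e2
    rwa [this] at hq
  have m2 : (x - 1, y) ∈ S := by
    obtain ⟨q, hq, hm⟩ := get (-δ) δ (Or.inr rfl) (Or.inl rfl)
    rw [mem_unitSq] at hm
    dsimp only at hm
    have e1 : q.1 = x - 1 := int_sand_neg hδ0 hδ1 (by linarith [hm.1.1]) (by linarith [hm.1.2])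
    have e2 : q.2 = y := int_sand hδ0 hδ1 hm.2.1 hm.2.2
    have : q = (x - 1, y) := Prod.ext e1 e2
    rwa [this] at hq
  have m3 : (x, y - 1) ∈ S := by
    obtain ⟨q, hq, hm⟩ := get δ (-δ) (Or.inl rfl) (Or.inr rfl)
    rw [mem_unitSq] at hm
    dsimp only at hm
    have e1 : q.1 = x := int_sand hδ0 hδ1 hm.1.1 hm.1.2
    have e2 : q.2 = y - 1 := int_sand_neg hδ0 hδ1 (by linarith [hm.2.1]) (by linarith [hm.2.2])
    have : q = (x, y - 1) := Prod.ext e1 e2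
    rwa [this] at hq
  exact ⟨m1, m2, m3, m4⟩

lemma center_mem_interior {q : ℤ × ℤ} (hq : q ∈ S) :
    (((q.1:ℝ) + 1/2, (q.2:ℝ) + 1/2) : ℝ × ℝ) ∈ interior (meshRegion S) := by
  have hsub : (Set.Ioo (q.1:ℝ) (q.1+1)) ×ˢ (Set.Ioo (q.2:ℝ) (q.2+1)) ⊆
      interior (meshRegion S) := by
    apply interior_maximal
    · intro p hp
      rw [mem_meshRegion]
      exact ⟨q, hq, ⟨Set.Ioo_subset_Icc_self hp.1, Set.Ioo_subset_Icc_self hp.2⟩⟩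
    · exact isOpen_Ioo.prod isOpen_Ioo
  exact hsub ⟨⟨by linarith, by linarith⟩, ⟨by linarith, by linarith⟩⟩

lemma center_unique {q q' : ℤ × ℤ}
    (h : (((q.1:ℝ) + 1/2, (q.2:ℝ) + 1/2) : ℝ × ℝ) ∈ unitSq q') : q' = q := by
  rw [mem_unitSq] at h
  exact Prod.ext (int_sand (by norm_num) (by norm_num) h.1.1 h.1.2)
    (int_sand (by norm_num) (by norm_num) h.2.1 h.2.2)
end Topo
section Topo2
variable (S : Finset (ℤ × ℤ))

lemma eshare_pos {p : ℝ × ℝ} {a b : ℤ × ℤ} (hp : p ∈ interior (meshRegion S))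
    (hpa : p ∈ unitSq a) (hpb : p ∈ unitSq b) (ha : a ∈ S) (hb : b ∈ S)
    (hle : a.1 ≤ b.1) : ereach S a b := by
  rw [mem_unitSq] at hpa hpb
  obtain ⟨⟨ha1, ha2⟩, ha3, ha4⟩ := hpa
  obtain ⟨⟨hb1, hb2⟩, hb3, hb4⟩ := hpb
  have hd1 : b.1 = a.1 ∨ b.1 = a.1 + 1 := by
    have : (b.1:ℝ) ≤ (a.1:ℝ) + 1 := le_trans hb1 ha2
    have h1 : b.1 ≤ a.1 + 1 := by exact_mod_cast show (b.1:ℝ) ≤ ((a.1+1:ℤ):ℝ) by push_cast; linarith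
    omega
  have hd2 : b.2 = a.2 - 1 ∨ b.2 = a.2 ∨ b.2 = a.2 + 1 := by
    have h1 : b.2 ≤ a.2 + 1 := by exact_mod_cast show (b.2:ℝ) ≤ ((a.2+1:ℤ):ℝ) by push_cast; linarith
    have h2 : a.2 ≤ b.2 + 1 := by exact_mod_cast show (a.2:ℝ) ≤ ((b.2+1:ℤ):ℝ) by push_cast; linarith
    omega
  rcases hd1 with hd1 | hd1
  · -- same column
    rcases hd2 with hd2 | hd2 | hd2
    · exact Relation.ReflTransGen.single ⟨ha, hb, Or.inr (Or.inr (Or.inr (Prod.ext hd1 hd2)))⟩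
    · have : b = a := Prod.ext hd1 hd2
      rw [this]
      exact Relation.ReflTransGen.refl
    · exact Relation.ReflTransGen.single ⟨ha, hb, Or.inr (Or.inr (Or.inl (Prod.ext hd1 hd2)))⟩
  · -- b.1 = a.1 + 1
    have hp1 : p.1 = (a.1:ℝ) + 1 := le_antisymm ha2 (by
      have : ((a.1:ℝ) + 1) = ((b.1:ℤ):ℝ) := by push_cast; rw [hd1]; push_cast; ring
      rw [this]; exact hb1)
    rcases hd2 with hd2 | hd2 | hd2
    · -- vertex (a.1+1, a.2)
      have hp2 : p.2 = (a.2:ℝ) := le_antisymm (by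
          have : ((a.2:ℝ)) = ((b.2:ℤ):ℝ) + 1 := by rw [hd2]; push_cast; ring
          rw [this]; exact hb4) ha3
      have hpv : p = (((a.1 + 1 : ℤ):ℝ), ((a.2 : ℤ):ℝ)) := by
        apply Prod.ext <;> push_cast <;> simp [hp1, hp2]
      rw [hpv] at hp
      have hv := vertex_int S hp
      have m1 : (a.1 + 1, a.2) ∈ S := hv.2.2.2
      have m2 : (a.1 + 1, a.2 - 1) ∈ S := by
        have := hv.2.2.1
        simpa using this
      refine Relation.ReflTransGen.tail (Relation.ReflTransGen.single
        (⟨ha, m1, Or.inl rfl⟩ : eadj S a (a.1 + 1, a.2))) ?_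
      exact ⟨m1, hb, Or.inr (Or.inr (Or.inr (Prod.ext (by simp [hd1]) (by simp [hd2]))))⟩
    · exact Relation.ReflTransGen.single ⟨ha, hb, Or.inl (Prod.ext hd1 hd2)⟩
    · -- vertex (a.1+1, a.2+1)
      have hp2 : p.2 = (a.2:ℝ) + 1 := le_antisymm ha4 (by
          have : ((a.2:ℝ) + 1) = ((b.2:ℤ):ℝ) := by rw [hd2]; push_cast; ring
          rw [this]; exact hb3)
      have hpv : p = (((a.1 + 1 : ℤ):ℝ), ((a.2 + 1 : ℤ):ℝ)) := by
        apply Prod.ext <;> push_cast <;> simp [hp1, hp2]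
      rw [hpv] at hp
      have hv := vertex_int S hp
      have m1 : (a.1, a.2 + 1) ∈ S := by
        have := hv.2.1
        simpa using this
      refine Relation.ReflTransGen.tail (Relation.ReflTransGen.single
        (⟨ha, m1, Or.inr (Or.inr (Or.inl rfl))⟩ : eadj S a (a.1, a.2 + 1))) ?_
      exact ⟨m1, hb, Or.inl (Prod.ext (by simp [hd1]) (by simp [hd2]))⟩

lemma eshare {p : ℝ × ℝ} {a b : ℤ × ℤ} (hp : p ∈ interior (meshRegion S))
    (hpa : p ∈ unitSq a) (hpb : p ∈ unitSq b) (ha : a ∈ S) (hb : b ∈ S) :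
    ereach S a b := by
  by_cases hle : a.1 ≤ b.1
  · exact eshare_pos S hp hpa hpb ha hb hle
  · exact ereach_symm S (eshare_pos S hp hpb hpa hb ha (by omega))

lemma standing_ereach (hS : Standing S) {a b : ℤ × ℤ} (ha : a ∈ S) (hb : b ∈ S) :
    ereach S a b := by
  classical
  by_contra hnr
  set A : Finset (ℤ × ℤ) := S.filter (fun q => ereach S a q) with hA
  set B : Finset (ℤ × ℤ) := S.filter (fun q => ¬ ereach S a q) with hB
  have hcon := hS.connected.isPreconnected
  have hu : IsOpen (meshRegion B)ᶜ := (isClosed_meshRegion B).isOpen_compl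
  have hv : IsOpen (meshRegion A)ᶜ := (isClosed_meshRegion A).isOpen_compl
  have hcover : interior (meshRegion S) ⊆ (meshRegion B)ᶜ ∪ (meshRegion A)ᶜ := by
    intro p hp
    by_contra hc
    simp only [Set.mem_union, Set.mem_compl_iff, not_or, not_not] at hc
    obtain ⟨hpB, hpA⟩ := hc
    obtain ⟨qb, hqb, hpqb⟩ := mem_meshRegion.mp hpB
    obtain ⟨qa, hqa, hpqa⟩ := mem_meshRegion.mp hpA
    rw [hB, Finset.mem_filter] at hqb
    rw [hA, Finset.mem_filter] at hqa
    exact hqb.2 (Relation.ReflTransGen.trans hqa.2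
      (eshare S hp hpqa hpqb hqa.1 hqb.1))
  have hneu : (interior (meshRegion S) ∩ (meshRegion B)ᶜ).Nonempty := by
    refine ⟨((a.1:ℝ) + 1/2, (a.2:ℝ) + 1/2), center_mem_interior S ha, ?_⟩
    intro hmem
    obtain ⟨q, hq, hpq⟩ := mem_meshRegion.mp hmem
    rw [center_unique hpq] at hq
    rw [hB, Finset.mem_filter] at hq
    exact hq.2 Relation.ReflTransGen.refl
  have hnev : (interior (meshRegion S) ∩ (meshRegion A)ᶜ).Nonempty := by
    refine ⟨((b.1:ℝ) + 1/2, (b.2:ℝ) + 1/2), center_mem_interior S hb, ?_⟩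
    intro hmem
    obtain ⟨q, hq, hpq⟩ := mem_meshRegion.mp hmem
    rw [center_unique hpq] at hq
    rw [hA, Finset.mem_filter] at hq
    exact hnr hq.2
  obtain ⟨p, hpint, hpu, hpv⟩ := hcon _ _ hu hv hcover hneu hnev
  obtain ⟨q, hq, hpq⟩ := mem_meshRegion.mp (interior_subset hpint)
  by_cases hr : ereach S a q
  · exact hpv (mem_meshRegion.mpr ⟨q, by rw [hA, Finset.mem_filter]; exact ⟨hq, hr⟩, hpq⟩)
  · exact hpu (mem_meshRegion.mpr ⟨q, by rw [hB, Finset.mem_filter]; exact ⟨hq, hr⟩, hpq⟩)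
end Topo2
/-- Under the standing assumptions, the image of the linear map `c ↦ Dc`,
defined on the space of functions `c : ℤ × ℤ → ℝ × ℝ` supported on the interior vertices, is
exactly the space of functions `g` on the squares of `S` whose total sum over the red squares
and whose total sum over the black squares are both zero. -/
theorem range_div_eq (S : Finset (ℤ × ℤ)) (h : Standing S) (g : ℤ × ℤ → ℝ) :
    (∃ c : ℤ × ℤ → ℝ × ℝ, (∀ v : ℤ × ℤ, ¬ interiorVertex S v → c v = 0) ∧
        ∀ q ∈ S, Ddiv c q = g q) ↔
      ((∑ q ∈ S.filter fun q => isRed q, g q) = 0 ∧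
        (∑ q ∈ S.filter fun q => ¬ isRed q, g q) = 0) := by
  constructor
  · rintro ⟨c, hsupp, hdiv⟩
    constructor
    · rw [Finset.sum_congr rfl (fun q hq => (hdiv q (Finset.mem_filter.mp hq).1).symm)]
      exact fwd_sum S c hsupp _ (fun v w hp => by omega)
    · rw [Finset.sum_congr rfl (fun q hq => (hdiv q (Finset.mem_filter.mp hq).1).symm)]
      exact fwd_sum S c hsupp _ (fun v w hp => by omega)
  · rintro ⟨h1, h2⟩
    exact backward S h
      (fun a b ha hb hp => ereach_dreach S h ha hb (standing_ereach S h ha hb) hp) g h1 h2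
end
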